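/- For every η ∈ ℝ, the coefficient A_{lmn}^{l₁m₁n₁, l₂m₂n₂} = ∫_{ℝ³} conj(p_{lmn}(v)) Q[φ_{l₁m₁n₁}, φ_{l₂m₂n₂}](v) dv satisfies the identity A_{lmn}^{l₁m₁n₁, l₂m₂n₂} = e^{i(m₁ + m₂ − m)η} A_{lmn}^{l₁m₁n₁, l₂m₂n₂}. -/

import Mathlib

noncomputable section

open MeasureTheory Real

/-- Velocity space `ℝ³`. -/
abbrev V3 := Fin 3 → ℝ

/-- Euclidean norm on `ℝ³`. -/
def enorm3 (v : V3) : ℝ := Real.sqrt (v 0 ^ 2 + v 1 ^ 2 + v 2 ^ 2)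

/-- Normalization `v / |v|` (zero if `v = 0`). -/
def nrm (v : V3) : V3 := (enorm3 v)⁻¹ • v

/-- Generalized Laguerre polynomial `L_n^{(α)}(x)`. -/
def laguerreL (n : ℕ) (α : ℝ) (x : ℝ) : ℝ :=
  ∑ k ∈ Finset.range (n + 1),
    (-1 : ℝ) ^ k * (Real.Gamma (n + α + 1) /
      (Real.Gamma (k + α + 1) * (n - k).factorial * k.factorial)) * x ^ k

/-- Associated Legendre function `P_l^m(x)` (Condon–Shortley phase), via the
Rodrigues-type formula `P_l^m(x) = ((-1)^m / (2^l l!)) (1-x²)^{m/2} d^{l+m}/dx^{l+m} (x²-1)^l`. -/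
def assocLegendre (l : ℕ) (m : ℤ) (x : ℝ) : ℝ :=
  ((-1 : ℝ) ^ m / (2 ^ l * l.factorial)) * (1 - x ^ 2) ^ ((m : ℝ) / 2) *
    iteratedDeriv ((l : ℤ) + m).toNat (fun y : ℝ => (y ^ 2 - 1) ^ l) x

/-- Orthonormal complex spherical harmonic `Y_l^m(u)` evaluated at a unit vector
`u = (sin θ cos φ, sin θ sin φ, cos θ)`. -/
def sphY (l : ℕ) (m : ℤ) (u : V3) : ℂ :=
  (Real.sqrt ((2 * l + 1) / (4 * Real.pi) *
      ((((l : ℤ) - m).toNat.factorial : ℝ) / (((l : ℤ) + m).toNat.factorial : ℝ))) : ℂ) *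
    (assocLegendre l m (u 2) : ℂ) *
    Complex.exp (Complex.I * (m : ℂ) * (Complex.arg ((u 0 : ℂ) + (u 1 : ℂ) * Complex.I) : ℂ))

/-- The Maxwellian `M(v) = (2π)^{-3/2} exp(-|v|²/2)`. -/
def maxwellian (v : V3) : ℝ :=
  (2 * Real.pi) ^ (-(3 : ℝ) / 2) * Real.exp (-enorm3 v ^ 2 / 2)

/-- The (normalized) Burnett polynomial `p_{lmn}`. -/
def burnett (l : ℕ) (m : ℤ) (n : ℕ) (v : V3) : ℂ :=
  (Real.sqrt ((2 : ℝ) ^ (1 - (l : ℤ)) * Real.pi ^ ((3 : ℝ) / 2) * (n.factorial : ℝ) /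
      Real.Gamma ((n : ℝ) + (l : ℝ) + 3 / 2)) : ℂ) *
    (laguerreL n ((l : ℝ) + 1 / 2) (enorm3 v ^ 2 / 2) : ℂ) *
    ((enorm3 v ^ l : ℝ) : ℂ) * sphY l m (nrm v)

/-- The basis function `φ_{lmn} = p_{lmn} M`. -/
def phiB (l : ℕ) (m : ℤ) (n : ℕ) (v : V3) : ℂ := burnett l m n v * (maxwellian v : ℂ)

/-- Cross product on `ℝ³`. -/
def cross3 (a b : V3) : V3 :=
  ![a 1 * b 2 - a 2 * b 1, a 2 * b 0 - a 0 * b 2, a 0 * b 1 - a 1 * b 0]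

/-- A measurable choice of a first unit vector orthogonal to `g`. -/
def e1v (g : V3) : V3 :=
  if g 0 = 0 ∧ g 1 = 0 then ![1, 0, 0] else nrm ![-(g 1), g 0, 0]

/-- The second unit vector orthogonal to `g`, completing `(ĝ, e1v g, e2v g)`. -/
def e2v (g : V3) : V3 := cross3 (nrm g) (e1v g)

/-- Parametrization of the unit circle `{n : n ⊥ g, |n| = 1}` by the angle `φ`. -/
def circVec (g : V3) (φ : ℝ) : V3 := Real.cos φ • e1v g + Real.sin φ • e2v g

/-- Post-collisional velocity `v'`. -/
def postV (v v₁ : V3) (φ χ : ℝ) : V3 :=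
  Real.cos (χ / 2) ^ 2 • v + Real.sin (χ / 2) ^ 2 • v₁ -
    (enorm3 (v - v₁) * Real.cos (χ / 2) * Real.sin (χ / 2)) • circVec (v - v₁) φ

/-- Post-collisional velocity `v₁'`. -/
def postV1 (v v₁ : V3) (φ χ : ℝ) : V3 :=
  Real.cos (χ / 2) ^ 2 • v₁ + Real.sin (χ / 2) ^ 2 • v +
    (enorm3 (v - v₁) * Real.cos (χ / 2) * Real.sin (χ / 2)) • circVec (v - v₁) φ

/-- The integrand of the Boltzmann collision operator, as a function of
`(v₁, φ, χ)` where `φ` parametrizes the circle `{n : n ⊥ v - v₁, |n| = 1}`. -/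
def collKer (B : ℝ → ℝ → ℝ) (f g : V3 → ℂ) (v : V3) (p : V3 × ℝ × ℝ) : ℂ :=
  (B (enorm3 (v - p.1)) p.2.2 : ℂ) *
    (f (postV1 v p.1 p.2.1 p.2.2) * g (postV v p.1 p.2.1 p.2.2) - f p.1 * g v)

/-- The (bilinear) Boltzmann collision operator `Q[f,g](v)`. -/
def collQ (B : ℝ → ℝ → ℝ) (f g : V3 → ℂ) (v : V3) : ℂ :=
  ∫ v₁ : V3, ∫ φ in (0 : ℝ)..(2 * Real.pi), ∫ χ in (0 : ℝ)..Real.pi,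
    collKer B f g v (v₁, φ, χ)

/-- The domain of integration `ℝ³ × (0, 2π] × (0, π]` for the collision integrand. -/
def collDom : Set (V3 × ℝ × ℝ) :=
  Set.univ ×ˢ Set.Ioc 0 (2 * Real.pi) ×ˢ Set.Ioc 0 Real.pi

/-- The Burnett expansion coefficient `A_{lmn}^{l₁m₁n₁,l₂m₂n₂}` of the collision operator. -/
def coefA (B : ℝ → ℝ → ℝ) (l : ℕ) (m : ℤ) (n : ℕ) (l₁ : ℕ) (m₁ : ℤ) (n₁ : ℕ)
    (l₂ : ℕ) (m₂ : ℤ) (n₂ : ℕ) : ℂ :=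
  ∫ v : V3, (starRingEnd ℂ) (burnett l m n v) * collQ B (phiB l₁ m₁ n₁) (phiB l₂ m₂ n₂) v

/-- The three-dimensional Hermite polynomial
`H^{k₁k₂k₃}(v) = ((-1)^{k₁+k₂+k₃}/M(v)) ∂^{k₁+k₂+k₃} M / ∂v₁^{k₁} ∂v₂^{k₂} ∂v₃^{k₃}`. -/
def hermite3 (k₁ k₂ k₃ : ℕ) (v : V3) : ℝ :=
  ((-1 : ℝ) ^ (k₁ + k₂ + k₃) / maxwellian v) *
    iteratedDeriv k₁ (fun x =>
      iteratedDeriv k₂ (fun y =>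
        iteratedDeriv k₃ (fun z => maxwellian ![x, y, z]) (v 2)) (v 1)) (v 0)

/-- The connection coefficient `C_{lmn}^{k₁k₂k₃} = ∫ p_{lmn} H^{k₁k₂k₃} M dv`. -/
def connC (l : ℕ) (m : ℤ) (n : ℕ) (k₁ k₂ k₃ : ℕ) : ℂ :=
  ∫ v : V3, burnett l m n v * ((hermite3 k₁ k₂ k₃ v : ℝ) : ℂ) * ((maxwellian v : ℝ) : ℂ)

/-- Expansion coefficient of an integrable function in the Burnett basis. -/
def fCoef (f : V3 → ℝ) (l : ℕ) (m : ℤ) (n : ℕ) : ℂ :=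
  ∫ v : V3, (starRingEnd ℂ) (burnett l m n v) * (f v : ℂ)

/-- The index set `I_d = {(k₁,k₂,k₃) ∈ ℕ³ : k₁+k₂+k₃ = d}` as a finite set. -/
def idxSet (d : ℕ) : Finset (ℕ × ℕ × ℕ) :=
  (Finset.range (d + 1) ×ˢ Finset.range (d + 1) ×ˢ Finset.range (d + 1)).filter
    (fun k => k.1 + k.2.1 + k.2.2 = d)


/-- Rotation about the `z`-axis by angle `η`. -/
def rotZ (η : ℝ) (v : V3) : V3 :=
  ![Real.cos η * v 0 - Real.sin η * v 1, Real.sin η * v 0 + Real.cos η * v 1, v 2]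

lemma rotZ_apply0 (η : ℝ) (v : V3) : rotZ η v 0 = Real.cos η * v 0 - Real.sin η * v 1 := rfl
lemma rotZ_apply1 (η : ℝ) (v : V3) : rotZ η v 1 = Real.sin η * v 0 + Real.cos η * v 1 := rfl
lemma rotZ_apply2 (η : ℝ) (v : V3) : rotZ η v 2 = v 2 := rfl

lemma enorm3_rotZ (η : ℝ) (v : V3) : enorm3 (rotZ η v) = enorm3 v := by
  unfold enorm3
  congr 1
  simp only [rotZ_apply0, rotZ_apply1, rotZ_apply2]
  have h := Real.sin_sq_add_cos_sq η
  nlinarith [h]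

lemma rotZ_smul (η : ℝ) (c : ℝ) (v : V3) : rotZ η (c • v) = c • rotZ η v := by
  funext i
  fin_cases i <;> simp [rotZ, Pi.smul_apply, smul_eq_mul] <;> ring

lemma rotZ_add (η : ℝ) (v w : V3) : rotZ η (v + w) = rotZ η v + rotZ η w := by
  funext i
  fin_cases i <;> simp [rotZ, Pi.add_apply] <;> ring

lemma rotZ_sub (η : ℝ) (v w : V3) : rotZ η (v - w) = rotZ η v - rotZ η w := by
  funext i
  fin_cases i <;> simp [rotZ, Pi.sub_apply] <;> ring

lemma nrm_rotZ (η : ℝ) (v : V3) : nrm (rotZ η v) = rotZ η (nrm v) := by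
  unfold nrm
  rw [enorm3_rotZ, rotZ_smul]
lemma cross3_rotZ (η : ℝ) (a b : V3) : cross3 (rotZ η a) (rotZ η b) = rotZ η (cross3 a b) := by
  funext i
  fin_cases i
  · simp [cross3, rotZ]; ring
  · simp [cross3, rotZ]; ring
  · simp [cross3, rotZ]
    linear_combination (a 0 * b 1 - a 1 * b 0) * Real.sin_sq_add_cos_sq η

lemma rotZ_zero_iff (η : ℝ) (g : V3) :
    (rotZ η g 0 = 0 ∧ rotZ η g 1 = 0) ↔ (g 0 = 0 ∧ g 1 = 0) := by
  simp only [rotZ_apply0, rotZ_apply1]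
  constructor
  · rintro ⟨h1, h2⟩
    have h := Real.sin_sq_add_cos_sq η
    constructor
    · linear_combination Real.cos η * h1 + Real.sin η * h2 - g 0 * h
    · linear_combination Real.cos η * h2 - Real.sin η * h1 - g 1 * h
  · rintro ⟨h1, h2⟩
    rw [h1, h2]; constructor <;> ring

lemma e1v_rotZ (η : ℝ) (g : V3) (h : ¬(g 0 = 0 ∧ g 1 = 0)) :
    e1v (rotZ η g) = rotZ η (e1v g) := by
  have h' : ¬(rotZ η g 0 = 0 ∧ rotZ η g 1 = 0) := by
    rw [rotZ_zero_iff]; exact h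
  rw [e1v, if_neg h', e1v, if_neg h]
  have key : ![-(rotZ η g 1), rotZ η g 0, 0] = rotZ η ![-(g 1), g 0, 0] := by
    funext i
    fin_cases i <;> simp [rotZ] <;> ring
  rw [key, nrm_rotZ]

lemma e2v_rotZ (η : ℝ) (g : V3) (h : ¬(g 0 = 0 ∧ g 1 = 0)) :
    e2v (rotZ η g) = rotZ η (e2v g) := by
  rw [e2v, nrm_rotZ, e1v_rotZ η g h, cross3_rotZ, e2v]

lemma circVec_rotZ (η : ℝ) (g : V3) (φ : ℝ) (h : ¬(g 0 = 0 ∧ g 1 = 0)) :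
    circVec (rotZ η g) φ = rotZ η (circVec g φ) := by
  rw [circVec, e1v_rotZ η g h, e2v_rotZ η g h, circVec, rotZ_add, rotZ_smul, rotZ_smul]

lemma postV_rotZ (η : ℝ) (v v₁ : V3) (φ χ : ℝ) (h : ¬((v - v₁) 0 = 0 ∧ (v - v₁) 1 = 0)) :
    postV (rotZ η v) (rotZ η v₁) φ χ = rotZ η (postV v v₁ φ χ) := by
  rw [postV, postV, ← rotZ_sub, enorm3_rotZ, circVec_rotZ η _ φ h, ← rotZ_smul, ← rotZ_smul,
    ← rotZ_smul, ← rotZ_add, ← rotZ_sub]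

lemma postV1_rotZ (η : ℝ) (v v₁ : V3) (φ χ : ℝ) (h : ¬((v - v₁) 0 = 0 ∧ (v - v₁) 1 = 0)) :
    postV1 (rotZ η v) (rotZ η v₁) φ χ = rotZ η (postV1 v v₁ φ χ) := by
  rw [postV1, postV1, ← rotZ_sub, enorm3_rotZ, circVec_rotZ η _ φ h, ← rotZ_smul, ← rotZ_smul,
    ← rotZ_smul, ← rotZ_add, ← rotZ_add]

lemma maxwellian_rotZ (η : ℝ) (v : V3) : maxwellian (rotZ η v) = maxwellian v := by
  rw [maxwellian, enorm3_rotZ, maxwellian]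
lemma exp_I_int_arg (m : ℤ) (z : ℂ) (hz : z ≠ 0) :
    Complex.exp (Complex.I * (m : ℂ) * (Complex.arg z : ℂ)) =
      (z / (‖z‖ : ℂ)) ^ m := by
  have habs : (‖z‖ : ℂ) ≠ 0 := by
    simpa using hz
  have h1 : Complex.exp ((Complex.arg z : ℂ) * Complex.I) = z / (‖z‖ : ℂ) := by
    field_simp
    rw [mul_comm]
    exact Complex.norm_mul_exp_arg_mul_I z
  calc Complex.exp (Complex.I * (m : ℂ) * (Complex.arg z : ℂ))
      = Complex.exp ((m : ℂ) * ((Complex.arg z : ℂ) * Complex.I)) := by ring_nf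
    _ = Complex.exp ((Complex.arg z : ℂ) * Complex.I) ^ m := Complex.exp_int_mul _ m
    _ = (z / (‖z‖ : ℂ)) ^ m := by rw [h1]

lemma sphY_rotZ (η : ℝ) (l : ℕ) (m : ℤ) (u : V3) (h : ¬(u 0 = 0 ∧ u 1 = 0)) :
    sphY l m (rotZ η u) = Complex.exp (Complex.I * (m : ℂ) * (η : ℂ)) * sphY l m u := by
  have hz : (u 0 : ℂ) + (u 1 : ℂ) * Complex.I ≠ 0 := by
    intro h0
    apply h
    constructor
    · have := congrArg Complex.re h0
      simpa using this
    · have := congrArg Complex.im h0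
      simpa using this
  have hrot : ((rotZ η u 0 : ℝ) : ℂ) + ((rotZ η u 1 : ℝ) : ℂ) * Complex.I
      = Complex.exp ((η : ℂ) * Complex.I) * ((u 0 : ℂ) + (u 1 : ℂ) * Complex.I) := by
    rw [Complex.exp_mul_I]
    simp only [rotZ_apply0, rotZ_apply1]
    push_cast
    rw [← Complex.ofReal_cos, ← Complex.ofReal_sin]
    ring_nf
    rw [Complex.I_sq]
    ring
  have hwne : ((rotZ η u 0 : ℝ) : ℂ) + ((rotZ η u 1 : ℝ) : ℂ) * Complex.I ≠ 0 := by
    rw [hrot]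
    exact mul_ne_zero (Complex.exp_ne_zero _) hz
  have habsz : ‖(((rotZ η u 0 : ℝ) : ℂ) + ((rotZ η u 1 : ℝ) : ℂ) * Complex.I)‖
      = ‖((u 0 : ℂ) + (u 1 : ℂ) * Complex.I)‖ := by
    rw [hrot, norm_mul, Complex.norm_exp_ofReal_mul_I, one_mul]
  have hexp : Complex.exp (Complex.I * (m : ℂ) *
        (Complex.arg (((rotZ η u 0 : ℝ) : ℂ) + ((rotZ η u 1 : ℝ) : ℂ) * Complex.I) : ℂ))
      = Complex.exp (Complex.I * (m : ℂ) * (η : ℂ)) *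
        Complex.exp (Complex.I * (m : ℂ) *
          (Complex.arg ((u 0 : ℂ) + (u 1 : ℂ) * Complex.I) : ℂ)) := by
    rw [exp_I_int_arg m _ hwne, exp_I_int_arg m _ hz, habsz, hrot, mul_div_assoc, mul_zpow]
    congr 1
    rw [← Complex.exp_int_mul]
    congr 1
    ring
  rw [sphY, sphY, rotZ_apply2, hexp]
  ring
lemma enorm3_ne_zero (v : V3) (h : ¬(v 0 = 0 ∧ v 1 = 0)) : enorm3 v ≠ 0 := by
  have h0 : v 0 ^ 2 + v 1 ^ 2 + v 2 ^ 2 ≠ 0 := by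
    intro hs
    apply h
    have h1 : v 0 ^ 2 = 0 := by nlinarith [sq_nonneg (v 0), sq_nonneg (v 1), sq_nonneg (v 2)]
    have h2 : v 1 ^ 2 = 0 := by nlinarith [sq_nonneg (v 0), sq_nonneg (v 1), sq_nonneg (v 2)]
    exact ⟨pow_eq_zero_iff two_ne_zero |>.mp h1, pow_eq_zero_iff two_ne_zero |>.mp h2⟩
  rw [enorm3]
  exact Real.sqrt_ne_zero'.mpr (lt_of_le_of_ne (by positivity) (Ne.symm h0))

lemma burnett_rotZ (η : ℝ) (l : ℕ) (m : ℤ) (n : ℕ) (v : V3)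
    (hm : -(l : ℤ) ≤ m ∧ m ≤ (l : ℤ)) :
    burnett l m n (rotZ η v) = Complex.exp (Complex.I * (m : ℂ) * (η : ℂ)) * burnett l m n v := by
  by_cases hv : v 0 = 0 ∧ v 1 = 0
  · have hRv : rotZ η v = v := by
      funext i
      fin_cases i <;> simp [rotZ, hv.1, hv.2]
    rw [hRv]
    by_cases hm0 : m = 0
    · subst hm0; simp
    · suffices hb : burnett l m n v = 0 by rw [hb]; ring
      by_cases hv2 : v 2 = 0
      · have hl : l ≠ 0 := by
          rintro rfl
          exact hm0 (by omega)
        have he : enorm3 v = 0 := by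
          rw [enorm3, hv.1, hv.2, hv2]
          simp
        rw [burnett, he, zero_pow hl]
        simp
      · have he : enorm3 v = |v 2| := by
          rw [enorm3, hv.1, hv.2]
          norm_num [Real.sqrt_sq_eq_abs]
        have hx2 : (nrm v 2) ^ 2 = 1 := by
          have hx : nrm v 2 = |v 2|⁻¹ * v 2 := by simp [nrm, he]
          rw [hx, mul_pow, inv_pow, sq_abs]
          field_simp
        have hAL : assocLegendre l m (nrm v 2) = 0 := by
          rw [assocLegendre]
          have h1 : (1 : ℝ) - nrm v 2 ^ 2 = 0 := by rw [hx2]; ring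
          rw [h1, Real.zero_rpow (div_ne_zero (Int.cast_ne_zero.mpr hm0) two_ne_zero)]
          ring
        have hY : sphY l m (nrm v) = 0 := by rw [sphY, hAL]; simp
        rw [burnett, hY, mul_zero]
  · have hne := enorm3_ne_zero v hv
    have h' : ¬(nrm v 0 = 0 ∧ nrm v 1 = 0) := by
      intro h0
      apply hv
      have e0 : nrm v 0 = (enorm3 v)⁻¹ * v 0 := by simp [nrm]
      have e1 : nrm v 1 = (enorm3 v)⁻¹ * v 1 := by simp [nrm]
      rw [e0] at h0
      rw [e1] at h0
      constructor
      · rcases mul_eq_zero.mp h0.1 with h | h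
        · exact absurd h (inv_ne_zero hne)
        · exact h
      · rcases mul_eq_zero.mp h0.2 with h | h
        · exact absurd h (inv_ne_zero hne)
        · exact h
    rw [burnett, burnett, enorm3_rotZ, nrm_rotZ, sphY_rotZ η l m (nrm v) h']
    ring

lemma phiB_rotZ (η : ℝ) (l : ℕ) (m : ℤ) (n : ℕ) (v : V3)
    (hm : -(l : ℤ) ≤ m ∧ m ≤ (l : ℤ)) :
    phiB l m n (rotZ η v) = Complex.exp (Complex.I * (m : ℂ) * (η : ℂ)) * phiB l m n v := by
  rw [phiB, phiB, burnett_rotZ η l m n v hm, maxwellian_rotZ]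
  ring
/-- The rotation matrix about the `z`-axis. -/
def rotM (η : ℝ) : Matrix (Fin 3) (Fin 3) ℝ :=
  !![Real.cos η, -Real.sin η, 0; Real.sin η, Real.cos η, 0; 0, 0, 1]

lemma rotM_toLin' (η : ℝ) : ⇑(Matrix.toLin' (rotM η)) = rotZ η := by
  funext v i
  fin_cases i <;>
    simp [Matrix.toLin'_apply, Matrix.mulVec, dotProduct, Fin.sum_univ_three, rotM, rotZ,
      Matrix.vecHead, Matrix.vecTail] <;>
    ring

lemma rotM_det (η : ℝ) : (rotM η).det = 1 := by
  rw [Matrix.det_fin_three]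
  simp [rotM]
  linear_combination Real.sin_sq_add_cos_sq η

lemma rotZ_measurable (η : ℝ) : Measurable (rotZ η) := by
  rw [← rotM_toLin']
  exact (LinearMap.continuous_on_pi _).measurable

lemma rotZ_rotZ_neg (η : ℝ) (v : V3) : rotZ (-η) (rotZ η v) = v := by
  funext i
  fin_cases i <;>
    simp [rotZ, Real.cos_neg, Real.sin_neg]
  · linear_combination v 0 * Real.sin_sq_add_cos_sq η
  · linear_combination v 1 * Real.sin_sq_add_cos_sq η

lemma rotZ_neg_rotZ (η : ℝ) (v : V3) : rotZ η (rotZ (-η) v) = v := by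
  have := rotZ_rotZ_neg (-η) v
  rwa [neg_neg] at this

/-- Rotation about the `z`-axis as a measurable equivalence. -/
def rotZEquiv (η : ℝ) : V3 ≃ᵐ V3 where
  toFun := rotZ η
  invFun := rotZ (-η)
  left_inv := rotZ_rotZ_neg η
  right_inv := rotZ_neg_rotZ η
  measurable_toFun := rotZ_measurable η
  measurable_invFun := rotZ_measurable (-η)

lemma rotZ_measurePreserving (η : ℝ) :
    MeasureTheory.MeasurePreserving (rotZ η) (volume : Measure V3) volume := by
  refine ⟨rotZ_measurable η, ?_⟩
  have hdet : LinearMap.det (Matrix.toLin' (rotM η)) ≠ 0 := by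
    rw [LinearMap.det_toLin', rotM_det]
    norm_num
  have := Real.map_linearMap_volume_pi_eq_smul_volume_pi hdet
  rw [rotM_toLin'] at this
  rw [this, LinearMap.det_toLin', rotM_det]
  simp
lemma collKer_rotZ (η : ℝ) (B : ℝ → ℝ → ℝ) (l₁ n₁ l₂ n₂ : ℕ) (m₁ m₂ : ℤ)
    (hm₁ : -(l₁ : ℤ) ≤ m₁ ∧ m₁ ≤ (l₁ : ℤ)) (hm₂ : -(l₂ : ℤ) ≤ m₂ ∧ m₂ ≤ (l₂ : ℤ))
    (v v₁ : V3) (h : ¬((v - v₁) 0 = 0 ∧ (v - v₁) 1 = 0)) (φ χ : ℝ) :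
    collKer B (phiB l₁ m₁ n₁) (phiB l₂ m₂ n₂) (rotZ η v) (rotZ η v₁, φ, χ) =
      Complex.exp (Complex.I * ((m₁ + m₂ : ℤ) : ℂ) * (η : ℂ)) *
        collKer B (phiB l₁ m₁ n₁) (phiB l₂ m₂ n₂) v (v₁, φ, χ) := by
  have hE : Complex.exp (Complex.I * (m₁ : ℂ) * (η : ℂ)) *
      Complex.exp (Complex.I * (m₂ : ℂ) * (η : ℂ)) =
      Complex.exp (Complex.I * ((m₁ + m₂ : ℤ) : ℂ) * (η : ℂ)) := by
    rw [← Complex.exp_add]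
    congr 1
    push_cast
    ring
  rw [collKer, collKer]
  simp only
  rw [← rotZ_sub, enorm3_rotZ, postV_rotZ η v v₁ φ χ h, postV1_rotZ η v v₁ φ χ h,
    phiB_rotZ η l₁ m₁ n₁ _ hm₁, phiB_rotZ η l₂ m₂ n₂ _ hm₂,
    phiB_rotZ η l₁ m₁ n₁ v₁ hm₁, phiB_rotZ η l₂ m₂ n₂ v hm₂, ← hE]
  ring

lemma collQ_rotZ (η : ℝ) (B : ℝ → ℝ → ℝ) (l₁ n₁ l₂ n₂ : ℕ) (m₁ m₂ : ℤ)
    (hm₁ : -(l₁ : ℤ) ≤ m₁ ∧ m₁ ≤ (l₁ : ℤ)) (hm₂ : -(l₂ : ℤ) ≤ m₂ ∧ m₂ ≤ (l₂ : ℤ)) (v : V3) :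
    collQ B (phiB l₁ m₁ n₁) (phiB l₂ m₂ n₂) (rotZ η v) =
      Complex.exp (Complex.I * ((m₁ + m₂ : ℤ) : ℂ) * (η : ℂ)) *
        collQ B (phiB l₁ m₁ n₁) (phiB l₂ m₂ n₂) v := by
  rw [collQ, collQ]
  have step1 :
      (∫ v₁ : V3, ∫ φ in (0:ℝ)..(2 * Real.pi), ∫ χ in (0:ℝ)..Real.pi,
        collKer B (phiB l₁ m₁ n₁) (phiB l₂ m₂ n₂) (rotZ η v) (v₁, φ, χ)) =
      ∫ v₁ : V3, ∫ φ in (0:ℝ)..(2 * Real.pi), ∫ χ in (0:ℝ)..Real.pi,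
        collKer B (phiB l₁ m₁ n₁) (phiB l₂ m₂ n₂) (rotZ η v) (rotZ η v₁, φ, χ) :=
    ((rotZ_measurePreserving η).integral_comp (rotZEquiv η).measurableEmbedding _).symm
  rw [step1]
  have hae : ∀ᵐ v₁ : V3, ¬((v - v₁) 0 = 0 ∧ (v - v₁) 1 = 0) := by
    have h0 : ∀ᵐ v₁ : V3, v₁ 0 ≠ v 0 := by
      have := MeasureTheory.Measure.ae_eval_ne (fun _ : Fin 3 => (volume : Measure ℝ)) 0 (v 0)
      rw [← MeasureTheory.volume_pi] at this
      exact this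
    filter_upwards [h0] with v₁ h1 h2
    exact h1 (by have := h2.1; simp only [Pi.sub_apply] at this; linarith)
  rw [MeasureTheory.integral_congr_ae
    (g := fun v₁ : V3 => Complex.exp (Complex.I * ((m₁ + m₂ : ℤ) : ℂ) * (η : ℂ)) *
      ∫ φ in (0:ℝ)..(2 * Real.pi), ∫ χ in (0:ℝ)..Real.pi,
        collKer B (phiB l₁ m₁ n₁) (phiB l₂ m₂ n₂) v (v₁, φ, χ)) ?_]
  · exact MeasureTheory.integral_const_mul _ _
  · filter_upwards [hae] with v₁ h
    have key := collKer_rotZ η B l₁ n₁ l₂ n₂ m₁ m₂ hm₁ hm₂ v v₁ h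
    simp_rw [key, intervalIntegral.integral_const_mul]
/-- key identity in the proof of Theorem 1. For every `η ∈ ℝ`,
`A_{lmn}^{l₁m₁n₁,l₂m₂n₂} = e^{i(m₁+m₂-m)η} A_{lmn}^{l₁m₁n₁,l₂m₂n₂}`. -/
theorem coefA_rotation_identity
    (B : ℝ → ℝ → ℝ) (hBmeas : Measurable (Function.uncurry B))
    (hBpos : ∀ r χ, 0 ≤ B r χ)
    (l n l₁ n₁ l₂ n₂ : ℕ) (m m₁ m₂ : ℤ)
    (hm : -(l : ℤ) ≤ m ∧ m ≤ (l : ℤ))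
    (hm₁ : -(l₁ : ℤ) ≤ m₁ ∧ m₁ ≤ (l₁ : ℤ))
    (hm₂ : -(l₂ : ℤ) ≤ m₂ ∧ m₂ ≤ (l₂ : ℤ))
    (hker : ∀ v : V3,
      IntegrableOn (collKer B (phiB l₁ m₁ n₁) (phiB l₂ m₂ n₂) v) collDom volume)
    (houter : Integrable (fun v : V3 =>
      (starRingEnd ℂ) (burnett l m n v) * collQ B (phiB l₁ m₁ n₁) (phiB l₂ m₂ n₂) v)) :
    ∀ η : ℝ,
      coefA B l m n l₁ m₁ n₁ l₂ m₂ n₂ =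
        Complex.exp (Complex.I * ((m₁ + m₂ - m : ℤ) : ℂ) * (η : ℂ)) *
          coefA B l m n l₁ m₁ n₁ l₂ m₂ n₂ := by
  intro η
  have hptw : ∀ v : V3,
      (starRingEnd ℂ) (burnett l m n (rotZ η v)) *
        collQ B (phiB l₁ m₁ n₁) (phiB l₂ m₂ n₂) (rotZ η v) =
      Complex.exp (Complex.I * ((m₁ + m₂ - m : ℤ) : ℂ) * (η : ℂ)) *
        ((starRingEnd ℂ) (burnett l m n v) *
          collQ B (phiB l₁ m₁ n₁) (phiB l₂ m₂ n₂) v) := by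
    intro v
    rw [burnett_rotZ η l m n v hm, collQ_rotZ η B l₁ n₁ l₂ n₂ m₁ m₂ hm₁ hm₂ v, map_mul]
    have hc : (starRingEnd ℂ) (Complex.exp (Complex.I * (m : ℂ) * (η : ℂ))) *
        Complex.exp (Complex.I * ((m₁ + m₂ : ℤ) : ℂ) * (η : ℂ)) =
        Complex.exp (Complex.I * ((m₁ + m₂ - m : ℤ) : ℂ) * (η : ℂ)) := by
      rw [← Complex.exp_conj, ← Complex.exp_add]
      congr 1
      simp only [map_mul, Complex.conj_I, Complex.conj_ofReal, map_intCast]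
      push_cast
      ring
    rw [← hc]
    ring
  have hcomp :
      coefA B l m n l₁ m₁ n₁ l₂ m₂ n₂ =
      ∫ v : V3, (starRingEnd ℂ) (burnett l m n (rotZ η v)) *
        collQ B (phiB l₁ m₁ n₁) (phiB l₂ m₂ n₂) (rotZ η v) :=
    ((rotZ_measurePreserving η).integral_comp (rotZEquiv η).measurableEmbedding _).symm
  conv_lhs => rw [hcomp]
  simp_rw [hptw]
  rw [MeasureTheory.integral_const_mul]
  rfl

end
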